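/- Let X be a nonempty complete subset of a metric space (Y,d), let α, ε ≥ 0 with α + ε < 1, and let F be a multivalued mapping from X to Y with nonempty bounded values that is an α-contraction. Assume that for each x ∈ X with x ∉ F(x) there exists z ∈ X with z ≠ x and (1−ε) d(x,z) ≤ d(x,F(x)) − d(z,F(x)). Then for each x ∈ X with x ∉ F(x) there exists z ∈ X with z ≠ x and (1−α−ε) d(x,z) ≤ d(x,F(x)) − d(z,F(z)), and consequently F has a fixed point. -/

import Mathlib

/-!
Since `F` is an `α`-contraction in the Hausdorff distance,
`d(z, F z) ≤ d(z, F x) + α d(x, z)`, which turns the inward-type condition into the descent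
inequality `(1 - α - ε) d(x, z) ≤ φ x - φ z` for `φ x = d(x, F x)`. The function `φ` is
Lipschitz and nonnegative, so by Caristi's theorem some `x` admits no such `z ≠ x`; hence
`x ∈ F x`. For Caristi's theorem, walk up the order `x ≼ z ↔ d(x, z) ≤ φ x - φ z`, each step
nearly minimizing `φ` among the points above the current one: the sets of points above the
iterates shrink to their limit, which is then `≼`-maximal.
-/

open Metric Filter

section Caristi

variable {X : Type*} [MetricSpace X] {φ : X → ℝ}

/-- The Brezis–Browder order: `z ∈ caristiSet φ x` means `x ≼ z`. -/
def caristiSet (φ : X → ℝ) (x : X) : Set X := {z | dist x z + φ z ≤ φ x}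

lemma mem_caristiSet_self (x : X) : x ∈ caristiSet φ x := by
  simp [caristiSet]

lemma caristiSet_subset {x z : X} (hz : z ∈ caristiSet φ x) :
    caristiSet φ z ⊆ caristiSet φ x := by
  intro w hw
  have := dist_triangle x z w
  simp only [caristiSet, Set.mem_ofPred_eq] at hz hw ⊢
  linarith

lemma isClosed_caristiSet (hφ : LowerSemicontinuous φ) (x : X) :
    IsClosed (caristiSet φ x) :=
  ((continuous_const.dist continuous_id).lowerSemicontinuous.add hφ).isClosed_preimage (φ x)

lemma exists_mem_caristiSet_forall_dist_le (hbdd : BddBelow (Set.range φ)) (x : X) {δ : ℝ}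
    (hδ : 0 < δ) : ∃ y ∈ caristiSet φ x, ∀ z ∈ caristiSet φ y, dist y z ≤ δ := by
  have hne : (φ '' caristiSet φ x).Nonempty := ⟨φ x, x, mem_caristiSet_self x, rfl⟩
  have hbdd' : BddBelow (φ '' caristiSet φ x) := hbdd.mono (Set.image_subset_range _ _)
  obtain ⟨_, ⟨y, hy, rfl⟩, hyδ⟩ := exists_lt_of_csInf_lt hne (lt_add_of_pos_right _ hδ)
  refine ⟨y, hy, fun z hz => ?_⟩
  have hinf : sInf (φ '' caristiSet φ x) ≤ φ z :=
    csInf_le hbdd' ⟨z, caristiSet_subset hy hz, rfl⟩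
  simp only [caristiSet, Set.mem_ofPred_eq] at hz
  linarith

/-- Weak form of Ekeland's variational principle (equivalently, Caristi's fixed point
theorem): the Brezis–Browder order has a maximal element. -/
theorem LowerSemicontinuous.exists_forall_dist_le_sub_imp_eq [CompleteSpace X] [Nonempty X]
    (hφ : LowerSemicontinuous φ) (hbdd : BddBelow (Set.range φ)) :
    ∃ x, ∀ z, dist x z ≤ φ x - φ z → z = x := by
  choose step hstep_mem hstep_dist using fun (n : ℕ) (x : X) =>
    exists_mem_caristiSet_forall_dist_le hbdd x (Nat.one_div_pos_of_nat (n := n))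
  let u : ℕ → X := fun n => Nat.rec (step 0 (Classical.arbitrary X)) (fun n y => step (n + 1) y) n
  have hu_succ (n : ℕ) : u (n + 1) ∈ caristiSet φ (u n) := hstep_mem _ _
  have hu_small (n : ℕ) : ∀ z ∈ caristiSet φ (u n), dist (u n) z ≤ 1 / (n + 1) := by
    cases n <;> exact hstep_dist _ _
  have hu_mono {n m : ℕ} (hnm : n ≤ m) : u m ∈ caristiSet φ (u n) := by
    induction m, hnm using Nat.le_induction with
    | base => exact mem_caristiSet_self _
    | succ m _ ih => exact caristiSet_subset ih (hu_succ m)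
  have hcauchy : CauchySeq u := by
    refine Metric.cauchySeq_iff'.2 fun δ hδ => ?_
    obtain ⟨N, hN⟩ := exists_nat_one_div_lt hδ
    refine ⟨N, fun n hn => ?_⟩
    rw [dist_comm]
    exact (hu_small N _ (hu_mono hn)).trans_lt hN
  obtain ⟨x, hx⟩ := cauchySeq_tendsto_of_complete hcauchy
  have hx_mem (n : ℕ) : x ∈ caristiSet φ (u n) :=
    (isClosed_caristiSet hφ _).mem_of_tendsto hx ((eventually_ge_atTop n).mono fun _ => hu_mono)
  refine ⟨x, fun z hz => tendsto_nhds_unique ?_ hx⟩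
  have hz_mem (n : ℕ) : z ∈ caristiSet φ (u n) :=
    caristiSet_subset (hx_mem n) (by simp only [caristiSet, Set.mem_ofPred_eq]; linarith)
  exact tendsto_iff_dist_tendsto_zero.2 <| squeeze_zero (fun _ => dist_nonneg)
    (fun n => hu_small n z (hz_mem n)) tendsto_one_div_add_atTop_nhds_zero_nat

end Caristi

section HausdorffLipschitz

variable {Y : Type*} [MetricSpace Y] {α : ℝ}

lemma infDist_le_infDist_add_mul_dist_of_hausdorffDist_le {T : Type*} [PseudoMetricSpace T]
    {F : T → Set Y}
    (hFne : ∀ x, (F x).Nonempty) (hFbdd : ∀ x, Bornology.IsBounded (F x))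
    (hcontr : ∀ x y, hausdorffDist (F y) (F x) ≤ α * dist y x) (y : Y) (x z : T) :
    infDist y (F z) ≤ infDist y (F x) + α * dist x z :=
  (infDist_le_infDist_add_hausdorffDist <|
    hausdorffEDist_ne_top_of_nonempty_of_bounded (hFne x) (hFne z) (hFbdd x) (hFbdd z)).trans
    (by linarith [hcontr z x])

lemma lipschitzWith_infDist_self {X : Set Y} {F : X → Set Y}
    (hFne : ∀ x, (F x).Nonempty) (hFbdd : ∀ x, Bornology.IsBounded (F x))
    (hcontr : ∀ x y : X, hausdorffDist (F y) (F x) ≤ α * dist (y : Y) (x : Y)) :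
    LipschitzWith (1 + α).toNNReal fun x : X => infDist (x : Y) (F x) := by
  refine LipschitzWith.of_le_add_mul' _ fun x z => ?_
  have h := infDist_le_infDist_add_mul_dist_of_hausdorffDist_le hFne hFbdd hcontr (x : Y) z x
  have := infDist_le_infDist_add_dist (x := (x : Y)) (y := (z : Y)) (s := F z)
  rw [dist_comm] at h
  simp only [Subtype.dist_eq] at h ⊢
  linarith

end HausdorffLipschitz

theorem fixed_point_of_inward_type_condition_general
    {Y : Type*} [MetricSpace Y] (X : Set Y) (hX : X.Nonempty) (hXc : IsComplete X)
    (α ε : ℝ) (hαε : α + ε < 1)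
    (F : X → Set Y) (hFne : ∀ x, (F x).Nonempty)
    (hFbdd : ∀ x, Bornology.IsBounded (F x))
    (hcontr : ∀ x y : X, hausdorffDist (F y) (F x) ≤ α * dist (y : Y) (x : Y))
    (hcond : ∀ x : X, (x : Y) ∉ F x → ∃ z : X, z ≠ x ∧
      (1 - ε) * dist (x : Y) (z : Y) ≤ infDist (x : Y) (F x) - infDist (z : Y) (F x)) :
    (∀ x : X, (x : Y) ∉ F x → ∃ z : X, z ≠ x ∧
      (1 - α - ε) * dist (x : Y) (z : Y) ≤
        infDist (x : Y) (F x) - infDist (z : Y) (F z)) ∧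
    ∃ x : X, (x : Y) ∈ F x := by
  have descent : ∀ x : X, (x : Y) ∉ F x → ∃ z : X, z ≠ x ∧
      (1 - α - ε) * dist (x : Y) (z : Y) ≤ infDist (x : Y) (F x) - infDist (z : Y) (F z) := by
    intro x hx
    obtain ⟨z, hzx, hz⟩ := hcond x hx
    have := infDist_le_infDist_add_mul_dist_of_hausdorffDist_le hFne hFbdd hcontr (z : Y) x z
    exact ⟨z, hzx, by rw [Subtype.dist_eq] at this; linarith⟩
  refine ⟨descent, ?_⟩
  have hc : 0 < 1 - α - ε := by linarith
  have : CompleteSpace X := hXc.completeSpace_coe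
  have : Nonempty X := hX.to_subtype
  obtain ⟨x, hx⟩ := ((lipschitzWith_infDist_self hFne hFbdd hcontr).continuous.div_const
    (1 - α - ε)).lowerSemicontinuous.exists_forall_dist_le_sub_imp_eq
    ⟨0, by rintro _ ⟨x, rfl⟩; exact div_nonneg infDist_nonneg hc.le⟩
  refine ⟨x, by_contra fun hxF => ?_⟩
  obtain ⟨z, hzx, hz⟩ := descent x hxF
  refine hzx (hx z ?_)
  rw [← sub_div, le_div_iff₀ hc, mul_comm]
  exact hz

/-- **Theorem 3.4.** Let `X` be a nonempty complete subset of a metric space `(Y,d)`,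
`α, ε ≥ 0` with `α + ε < 1`, and `F` an `α`-contraction from `X` to `Y` with nonempty
bounded values. Assume for each `x ∈ X` with `x ∉ F(x)` there exists `z ∈ X`, `z ≠ x`,
with `(1−ε)·d(x,z) ≤ d(x,F(x)) − d(z,F(x))`. Then for each `x ∈ X` with `x ∉ F(x)`
there exists `z ∈ X`, `z ≠ x`, with `(1−α−ε)·d(x,z) ≤ d(x,F(x)) − d(z,F(z))`, and
consequently `F` has a fixed point. -/
theorem fixed_point_of_inward_type_condition
    {Y : Type*} [MetricSpace Y] (X : Set Y) (hX : X.Nonempty) (hXc : IsComplete X)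
    (α ε : ℝ) (hα : 0 ≤ α) (hε : 0 ≤ ε) (hαε : α + ε < 1)
    (F : X → Set Y) (hFne : ∀ x, (F x).Nonempty)
    (hFbdd : ∀ x, Bornology.IsBounded (F x))
    (hcontr : ∀ x y : X, hausdorffDist (F y) (F x) ≤ α * dist (y : Y) (x : Y))
    (hcond : ∀ x : X, (x : Y) ∉ F x → ∃ z : X, z ≠ x ∧
      (1 - ε) * dist (x : Y) (z : Y) ≤ infDist (x : Y) (F x) - infDist (z : Y) (F x)) :
    (∀ x : X, (x : Y) ∉ F x → ∃ z : X, z ≠ x ∧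
      (1 - α - ε) * dist (x : Y) (z : Y) ≤
        infDist (x : Y) (F x) - infDist (z : Y) (F z)) ∧
    ∃ x : X, (x : Y) ∈ F x :=
  fixed_point_of_inward_type_condition_general X hX hXc α ε hαε F hFne hFbdd hcontr hcond
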